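/- arXiv:1102.4898 — 10 statements merged into one kernel-verified Lean document; each statement's English description precedes it below -/
import Mathlib

section
/- If perfect state transfer occurs from u to v at time τ, then X is periodic at u and at v with period dividing 2τ; that is, |H(2τ)_{u,u}| = 1 and |H(2τ)_{v,v}| = 1. -/
/-!
`H(τ)` is unitary and, because `A` is symmetric, also symmetric. For a symmetric unitary `U`,
`U e_u = γ e_v` gives `Uᴴ e_v = γ̄ e_u`, and taking complex conjugates `U e_v = γ e_u`. Hence
`H(2τ) = H(τ)²` maps `e_u ↦ γ² e_u` and `e_v ↦ γ² e_v`, so both diagonal entries are `γ²`.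
-/

open Matrix Complex

/-- The transition matrix `H(t) = exp(itA)` of a continuous quantum walk on a graph. -/
noncomputable def transitionMatrix {V : Type*} [Fintype V] [DecidableEq V]
    (G : SimpleGraph V) [DecidableRel G.Adj] (t : ℝ) : Matrix V V ℂ :=
  NormedSpace.exp ((Complex.I * t) • G.adjMatrix ℂ)

namespace Matrix

variable {n R : Type*} [Fintype n] [DecidableEq n] [CommRing R] [StarRing R]

theorem mulVec_star_eq_of_isSymm_of_mem_unitaryGroup {U : Matrix n n R}
    (hU : U ∈ unitaryGroup n R) (hsym : U.IsSymm) {γ : R} (hγ : γ ∈ unitary R)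
    {x y : n → R} (h : U *ᵥ x = γ • y) : U *ᵥ star y = γ • star x := by
  have hx : x = γ • (Uᴴ *ᵥ y) := by
    calc x = (Uᴴ * U) *ᵥ x := by
          rw [← star_eq_conjTranspose, Unitary.star_mul_self_of_mem hU, one_mulVec]
      _ = γ • (Uᴴ *ᵥ y) := by rw [← mulVec_mulVec, h, mulVec_smul]
  have hstar : star (Uᴴ *ᵥ y) = U *ᵥ star y := by
    rw [star_mulVec, conjTranspose_conjTranspose, ← vecMul_transpose, hsym.eq]
  rw [hx, star_smul, hstar, smul_smul, Unitary.mul_star_self_of_mem hγ, one_smul]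

theorem mul_self_mulVec_single_of_isSymm_of_mem_unitaryGroup {U : Matrix n n R}
    (hU : U ∈ unitaryGroup n R) (hsym : U.IsSymm) {γ : R} (hγ : γ ∈ unitary R) {u v : n}
    (h : U *ᵥ Pi.single u 1 = γ • Pi.single v 1) :
    (U * U) *ᵥ Pi.single u 1 = (γ * γ) • Pi.single u 1 ∧
      (U * U) *ᵥ Pi.single v 1 = (γ * γ) • Pi.single v 1 := by
  have h' : U *ᵥ Pi.single v 1 = γ • Pi.single u 1 := by
    simpa only [← Pi.single_star, star_one] using
      mulVec_star_eq_of_isSymm_of_mem_unitaryGroup hU hsym hγ h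
  constructor
  · rw [← mulVec_mulVec, h, mulVec_smul, h', smul_smul]
  · rw [← mulVec_mulVec, h', mulVec_smul, h, smul_smul]

omit [StarRing R] in
theorem apply_self_eq_of_mulVec_single_eq {M : Matrix n n R} {u : n} {c : R}
    (h : M *ᵥ Pi.single u 1 = c • Pi.single u 1) : M u u = c := by
  simpa using congrFun h u

end Matrix

theorem Complex.mem_unitary_of_norm_eq_one {z : ℂ} (h : ‖z‖ = 1) : z ∈ unitary ℂ := by
  rw [Unitary.mem_iff_star_mul_self, RCLike.star_def, RCLike.conj_mul, h]
  norm_num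

section TransitionMatrix

variable {V : Type*} [Fintype V] [DecidableEq V] (G : SimpleGraph V) [DecidableRel G.Adj]

theorem transitionMatrix_add (s t : ℝ) :
    transitionMatrix G (s + t) = transitionMatrix G s * transitionMatrix G t := by
  rw [transitionMatrix, ofReal_add, mul_add, add_smul,
    exp_add_of_commute _ _ ((Commute.refl _).smul_left _ |>.smul_right _)]
  rfl

theorem transitionMatrix_isSymm (t : ℝ) : (transitionMatrix G t).IsSymm := by
  rw [IsSymm, transitionMatrix, ← exp_transpose, transpose_smul, G.transpose_adjMatrix]

theorem transitionMatrix_mem_unitaryGroup (t : ℝ) :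
    transitionMatrix G t ∈ unitaryGroup V ℂ := by
  set B := (I * t) • G.adjMatrix ℂ
  have hB : Bᴴ = -B := by
    rw [conjTranspose_smul, (G.isHermitian_adjMatrix ℂ).eq, ← neg_smul, star_mul',
      Complex.star_def, conj_I, conj_ofReal, neg_mul]
  rw [mem_unitaryGroup_iff', star_eq_conjTranspose, transitionMatrix, ← exp_conjTranspose, hB,
    ← exp_add_of_commute _ _ (Commute.refl B).neg_left, neg_add_cancel, NormedSpace.exp_zero]

end TransitionMatrix

/-- If perfect state transfer occurs from `u` to `v` at time `τ` (meaning
`H(τ) e_u = γ e_v` with `|γ| = 1`), then `X` is periodic at `u` and at `v`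
with period dividing `2τ`: `|H(2τ)_{u,u}| = 1` and `|H(2τ)_{v,v}| = 1`. -/
theorem pst_implies_periodic {V : Type*} [Fintype V] [DecidableEq V]
    (G : SimpleGraph V) [DecidableRel G.Adj] (u v : V) (τ : ℝ) (γ : ℂ)
    (hγ : ‖γ‖ = 1)
    (hpst : transitionMatrix G τ *ᵥ Pi.single u 1 = γ • (Pi.single v 1 : V → ℂ)) :
    ‖transitionMatrix G (2 * τ) u u‖ = 1 ∧
      ‖transitionMatrix G (2 * τ) v v‖ = 1 := by
  obtain ⟨hu, hv⟩ := mul_self_mulVec_single_of_isSymm_of_mem_unitaryGroup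
    (transitionMatrix_mem_unitaryGroup G τ) (transitionMatrix_isSymm G τ)
    (Complex.mem_unitary_of_norm_eq_one hγ) hpst
  rw [two_mul, transitionMatrix_add, apply_self_eq_of_mulVec_single_eq hu,
    apply_self_eq_of_mulVec_single_eq hv, norm_mul, hγ, mul_one]
  exact ⟨rfl, rfl⟩
end

section
/- Let A be a real symmetric matrix with spectral decomposition A = Σ_r θ_r E_r (with E_r the orthogonal projections onto the distinct eigenspaces). Then there is perfect state transfer from u to v at time τ if and only if there is a complex number γ of norm 1 such that E_r e_u = γ exp(−iτθ_r) E_r e_v for all r. -/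
/-!
Since the `E r` form a complete family of orthogonal idempotents, `c ↦ ∑ r, c r • E r` is an
algebra homomorphism `(Fin m → ℂ) →ₐ[ℂ] Matrix V V ℂ`; being continuous it commutes with `exp`, so
`H(τ) = ∑ r, exp (i τ θ_r) • E r`. Multiplying `H(τ) e_u = γ e_v` by `E r` isolates
`exp (i τ θ_r) • E r e_u = γ • E r e_v`, and conversely summing these identities over `r`
gives back `H(τ) e_u = γ e_v` because `∑ r, E r = 1`.
-/

open Matrix Complex

section

variable {R A ι : Type*} [Fintype ι] {P : ι → A}

namespace OrthogonalIdempotents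

theorem mul_sum_smul [CommSemiring R] [Semiring A] [Algebra R A]
    (hP : OrthogonalIdempotents P) (c : ι → R) (i : ι) :
    P i * ∑ j, c j • P j = c i • P i := by
  classical
  simp_rw [Finset.mul_sum, mul_smul_comm, hP.mul_eq, smul_ite, smul_zero,
    Finset.sum_ite_eq, Finset.mem_univ, if_true]

theorem sum_smul_mul_sum_smul [CommSemiring R] [Semiring A] [Algebra R A]
    (hP : OrthogonalIdempotents P) (a b : ι → R) :
    (∑ i, a i • P i) * ∑ j, b j • P j = ∑ i, (a i * b i) • P i := by
  simp_rw [Finset.sum_mul, smul_mul_assoc, hP.mul_sum_smul, smul_smul]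

end OrthogonalIdempotents

namespace CompleteOrthogonalIdempotents

def linearCombinationAlgHom [CommSemiring R] [Semiring A] [Algebra R A]
    (hP : CompleteOrthogonalIdempotents P) : (ι → R) →ₐ[R] A :=
  AlgHom.ofLinearMap (Fintype.linearCombination R P)
    (by simp [Fintype.linearCombination_apply, hP.complete])
    (fun a b => (hP.toOrthogonalIdempotents.sum_smul_mul_sum_smul a b).symm)

theorem linearCombinationAlgHom_apply [CommSemiring R] [Semiring A] [Algebra R A]
    (hP : CompleteOrthogonalIdempotents P) (c : ι → R) :
    hP.linearCombinationAlgHom c = ∑ i, c i • P i :=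
  rfl

theorem exp_sum_smul [NormedRing A] [NormedAlgebra ℂ A] [CompleteSpace A]
    (hP : CompleteOrthogonalIdempotents P) (c : ι → ℂ) :
    NormedSpace.exp (∑ i, c i • P i) = ∑ i, Complex.exp (c i) • P i := by
  have hcont : Continuous hP.linearCombinationAlgHom :=
    (Fintype.linearCombination ℂ P).continuous_of_finiteDimensional
  have := NormedSpace.map_exp_of_mem_ball (𝕂 := ℂ) hP.linearCombinationAlgHom hcont c
    (by simp [NormedSpace.expSeries_radius_eq_top])
  simpa only [linearCombinationAlgHom_apply, Pi.exp_def, Complex.exp_eq_exp_ℂ] using this.symm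

theorem matrix_exp_sum_smul {n : Type*} [Fintype n] [DecidableEq n] {P : ι → Matrix n n ℂ}
    (hP : CompleteOrthogonalIdempotents P) (c : ι → ℂ) :
    NormedSpace.exp (∑ i, c i • P i) = ∑ i, Complex.exp (c i) • P i :=
  -- `NormedSpace.exp` depends only on the topology, so any compatible matrix norm will do.
  letI : NormedRing (Matrix n n ℂ) := Matrix.linftyOpNormedRing
  letI : NormedAlgebra ℂ (Matrix n n ℂ) := Matrix.linftyOpNormedAlgebra
  hP.exp_sum_smul c

theorem sum_smul_mulVec_eq_iff {𝕜 n : Type*} [Field 𝕜] [Fintype n] [DecidableEq n]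
    {P : ι → Matrix n n 𝕜} (hP : CompleteOrthogonalIdempotents P) {w : ι → 𝕜}
    (hw : ∀ i, w i ≠ 0) (x y : n → 𝕜) :
    (∑ i, w i • P i) *ᵥ x = y ↔ ∀ i, P i *ᵥ x = (w i)⁻¹ • (P i *ᵥ y) := by
  constructor
  · rintro rfl i
    rw [mulVec_mulVec, hP.toOrthogonalIdempotents.mul_sum_smul, smul_mulVec, smul_smul,
      inv_mul_cancel₀ (hw i), one_smul]
  · intro h
    calc (∑ i, w i • P i) *ᵥ x = ∑ i, w i • (P i *ᵥ x) := by simp_rw [sum_mulVec, smul_mulVec]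
      _ = ∑ i, P i *ᵥ y := by simp_rw [h, smul_smul, mul_inv_cancel₀ (hw _), one_smul]
      _ = y := by rw [← sum_mulVec, hP.complete, one_mulVec]

end CompleteOrthogonalIdempotents

end

theorem SimpleGraph.adjMatrix_map_ofReal {V : Type*} (G : SimpleGraph V) [DecidableRel G.Adj] :
    (G.adjMatrix ℝ).map Complex.ofReal = G.adjMatrix ℂ := by
  ext i j
  simp only [map_apply, adjMatrix_apply]
  split_ifs <;> simp

theorem pst_iff_projections_general {V : Type*} [Fintype V] [DecidableEq V]
    (G : SimpleGraph V) [DecidableRel G.Adj]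
    {m : ℕ} (θ : Fin m → ℝ) (E : Fin m → Matrix V V ℝ)
    (hidem : ∀ r, E r * E r = E r)
    (horth : ∀ r s, r ≠ s → E r * E s = 0)
    (hsum : ∑ r, E r = 1)
    (hdecomp : G.adjMatrix ℝ = ∑ r, θ r • E r)
    (u v : V) (τ : ℝ) :
    (∃ γ : ℂ, ‖γ‖ = 1 ∧
        NormedSpace.exp ((Complex.I * τ) • G.adjMatrix ℂ) *ᵥ Pi.single u 1
          = γ • (Pi.single v 1 : V → ℂ)) ↔
    (∃ γ : ℂ, ‖γ‖ = 1 ∧ ∀ r,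
        (E r).map Complex.ofReal *ᵥ Pi.single u 1
          = (γ * Complex.exp (-(Complex.I * τ * θ r))) •
              ((E r).map Complex.ofReal *ᵥ Pi.single v 1)) := by
  have hE : CompleteOrthogonalIdempotents E := ⟨⟨hidem, horth⟩, hsum⟩
  have hF : CompleteOrthogonalIdempotents fun r => (E r).map Complex.ofReal :=
    hE.map (Complex.ofRealHom.mapMatrix : Matrix V V ℝ →+* Matrix V V ℂ)
  have hA : (Complex.I * τ) • G.adjMatrix ℂ
      = ∑ r, (Complex.I * τ * θ r) • (E r).map Complex.ofReal := by
    rw [← G.adjMatrix_map_ofReal, hdecomp]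
    ext i j
    simp [Matrix.sum_apply, Finset.mul_sum, mul_assoc]
  rw [hA, hF.matrix_exp_sum_smul]
  simp_rw [hF.sum_smul_mulVec_eq_iff (fun r => Complex.exp_ne_zero _), ← Complex.exp_neg,
    mulVec_smul, smul_smul, mul_comm (Complex.exp _)]

/-- Spectral characterization of perfect state transfer: with `A = Σ_r θ_r E_r` the spectral
decomposition of the adjacency matrix, there is perfect state transfer from `u` to `v` at
time `τ` iff there is a norm-one `γ` with `E_r e_u = γ exp(-iτθ_r) E_r e_v` for all `r`. -/
theorem pst_iff_projections {V : Type*} [Fintype V] [DecidableEq V]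
    (G : SimpleGraph V) [DecidableRel G.Adj]
    {m : ℕ} (θ : Fin m → ℝ) (E : Fin m → Matrix V V ℝ)
    (hθ : Function.Injective θ)
    (hsym : ∀ r, (E r)ᵀ = E r)
    (hidem : ∀ r, E r * E r = E r)
    (horth : ∀ r s, r ≠ s → E r * E s = 0)
    (hsum : ∑ r, E r = 1)
    (hdecomp : G.adjMatrix ℝ = ∑ r, θ r • E r)
    (u v : V) (τ : ℝ) :
    (∃ γ : ℂ, ‖γ‖ = 1 ∧
        NormedSpace.exp ((Complex.I * τ) • G.adjMatrix ℂ) *ᵥ Pi.single u 1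
          = γ • (Pi.single v 1 : V → ℂ)) ↔
    (∃ γ : ℂ, ‖γ‖ = 1 ∧ ∀ r,
        (E r).map Complex.ofReal *ᵥ Pi.single u 1
          = (γ * Complex.exp (-(Complex.I * τ * θ r))) •
              ((E r).map Complex.ofReal *ᵥ Pi.single v 1)) :=
  pst_iff_projections_general G θ E hidem horth hsum hdecomp u v τ
end

section
/- If there is perfect state transfer from u to v at time τ, then for each spectral idempotent E_r of the adjacency matrix, E_r e_u = ± E_r e_v. In particular u and v have the same eigenvalue support (the set of eigenvalues θ_r with E_r e_u ≠ 0 equals the set with E_r e_v ≠ 0). -/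
/-!
A spectral idempotent `E_r` satisfies `E_r A = θ_r E_r`, hence `E_r exp(iτA) = e^{iτθ_r} E_r`.
Applying `E_r` to `exp(iτA) e_u = γ e_v` gives `e^{iτθ_r} E_r e_u = γ E_r e_v`: two real vectors
that are proportional through unimodular complex scalars, so they agree up to a real unimodular
factor, i.e. up to sign.
-/

open Matrix Complex
open scoped Nat

theorem NormedSpace.mul_exp_of_mul_eq_smul {𝕂 𝔸 : Type*} [RCLike 𝕂] [NormedRing 𝔸]
    [NormedAlgebra 𝕂 𝔸] [CompleteSpace 𝔸] {p x : 𝔸} {a : 𝕂} (h : p * x = a • p) :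
    p * exp x = exp a • p := by
  have hpow : ∀ k : ℕ, p * x ^ k = a ^ k • p := by
    intro k
    induction k with
    | zero => simp
    | succ k ih => rw [pow_succ, ← mul_assoc, ih, smul_mul_assoc, h, smul_smul, pow_succ]
  have hterms : (fun k : ℕ => p * ((k !⁻¹ : 𝕂) • x ^ k)) = fun k => ((k !⁻¹ : 𝕂) • a ^ k) • p := by
    funext k
    rw [mul_smul_comm, hpow, smul_smul, smul_eq_mul]
  exact ((exp_series_hasSum_exp' x).mul_left p).unique
    (hterms ▸ (exp_series_hasSum_exp' a).smul_const p)

theorem Matrix.mulVec_exp_mulVec_of_mul_eq_smul {𝕂 n : Type*} [RCLike 𝕂] [Fintype n]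
    [DecidableEq n] {F X : Matrix n n 𝕂} {a : 𝕂} (h : F * X = a • F) (x : n → 𝕂) :
    F *ᵥ (NormedSpace.exp X *ᵥ x) = NormedSpace.exp a • (F *ᵥ x) := by
  -- `exp` is defined without reference to a norm; any algebra norm makes this a Banach algebra.
  have key : F * NormedSpace.exp X = NormedSpace.exp a • F :=
    open scoped Norms.Operator in NormedSpace.mul_exp_of_mul_eq_smul h
  rw [mulVec_mulVec, key, smul_mulVec]

theorem OrthogonalIdempotents.mul_sum_smul_s4 {R A ι : Type*} [CommSemiring R] [Semiring A]
    [Algebra R A] [Fintype ι] [DecidableEq ι] {e : ι → A} (he : OrthogonalIdempotents e)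
    (θ : ι → R) (s : ι) : e s * ∑ r, θ r • e r = θ s • e s := by
  simp_rw [Finset.mul_sum, mul_smul_comm, he.mul_eq, smul_ite, smul_zero, Finset.sum_ite_eq,
    Finset.mem_univ, if_true]

theorem SimpleGraph.map_adjMatrix {V α β : Type*} (G : SimpleGraph V) [DecidableRel G.Adj]
    [NonAssocSemiring α] [NonAssocSemiring β] (f : α →+* β) :
    (G.adjMatrix α).map f = G.adjMatrix β := by
  ext i j
  simp only [map_apply, adjMatrix_apply]
  split_ifs <;> simp

theorem eq_or_eq_neg_of_mul_ofReal_eq {ι : Type*} {x y : ι → ℝ} {a b : ℂ} (ha : a ≠ 0)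
    (hab : ‖a‖ = ‖b‖) (h : ∀ i, a * x i = b * y i) : x = y ∨ x = -y := by
  by_cases hy : y = 0
  · left
    ext i
    simpa [hy, ha] using h i
  obtain ⟨j, hj⟩ := Function.ne_iff.mp hy
  have hcross : ∀ i, x i * y j = x j * y i := by
    intro i
    have : a * ((x i * y j - x j * y i : ℝ) : ℂ) = 0 := by
      push_cast
      linear_combination (y j : ℂ) * h i - (y i : ℂ) * h j
    exact sub_eq_zero.mp (by exact_mod_cast (mul_eq_zero.mp this).resolve_left ha)
  have habs : |x j| = |y j| := by
    have := congrArg norm (h j)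
    rw [norm_mul, norm_mul, ← hab, Complex.norm_real, Complex.norm_real] at this
    exact mul_left_cancel₀ (norm_ne_zero_iff.mpr ha) this
  rcases abs_eq_abs.mp habs with hxy | hxy
  · left
    ext i
    exact mul_right_cancel₀ hj (by rw [hcross i, hxy, mul_comm])
  · right
    ext i
    exact mul_right_cancel₀ hj (by rw [hcross i, hxy, Pi.neg_apply]; ring)

theorem OrthogonalIdempotents.cexp_mul_mulVec_single_of_exp_mulVec_single {ι V : Type*}
    [Fintype ι] [DecidableEq ι] [Fintype V] [DecidableEq V] {θ : ι → ℝ}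
    {E : ι → Matrix V V ℝ} (hE : OrthogonalIdempotents E) {A : Matrix V V ℝ}
    (hA : A = ∑ r, θ r • E r) {u v : V} {τ : ℝ} {γ : ℂ}
    (hpst : NormedSpace.exp ((I * τ) • A.map ofRealHom) *ᵥ Pi.single u 1
      = γ • (Pi.single v 1 : V → ℂ)) (s : ι) (w : V) :
    cexp (I * τ * θ s) * (E s *ᵥ Pi.single u 1) w = γ * (E s *ᵥ Pi.single v 1) w := by
  set F := (E s).map ofRealHom
  have hFA : F * ((I * τ) • A.map ofRealHom) = (I * τ * θ s) • F := by
    rw [mul_smul_comm, ← Matrix.map_mul, hA, hE.mul_sum_smul_s4,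
      map_smul' _ _ _ (map_mul ofRealHom), smul_smul, ofRealHom_eq_coe]
  have hcomp := congrArg (F *ᵥ ·) hpst
  rw [mulVec_exp_mulVec_of_mul_eq_smul hFA, mulVec_smul, ← Complex.exp_eq_exp_ℂ] at hcomp
  simpa [F, mulVec_single] using congrFun hcomp w

theorem pst_projections_pm_general {V : Type*} [Fintype V] [DecidableEq V]
    (G : SimpleGraph V) [DecidableRel G.Adj]
    {m : ℕ} (θ : Fin m → ℝ) (E : Fin m → Matrix V V ℝ)
    (hidem : ∀ r, E r * E r = E r)
    (horth : ∀ r s, r ≠ s → E r * E s = 0)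
    (hdecomp : G.adjMatrix ℝ = ∑ r, θ r • E r)
    (u v : V) (τ : ℝ) (γ : ℂ) (hγ : ‖γ‖ = 1)
    (hpst : NormedSpace.exp ((Complex.I * τ) • G.adjMatrix ℂ) *ᵥ Pi.single u 1
      = γ • (Pi.single v 1 : V → ℂ)) :
    (∀ r, E r *ᵥ Pi.single u 1 = E r *ᵥ Pi.single v 1 ∨
        E r *ᵥ Pi.single u 1 = -(E r *ᵥ Pi.single v 1)) ∧
    {x : ℝ | ∃ r, θ r = x ∧ E r *ᵥ Pi.single u 1 ≠ 0}
      = {x : ℝ | ∃ r, θ r = x ∧ E r *ᵥ Pi.single v 1 ≠ 0} := by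
  have hE : OrthogonalIdempotents E := ⟨hidem, horth⟩
  rw [← G.map_adjMatrix ofRealHom] at hpst
  have hpm (r : Fin m) : E r *ᵥ Pi.single u 1 = E r *ᵥ Pi.single v 1 ∨
      E r *ᵥ Pi.single u 1 = -(E r *ᵥ Pi.single v 1) := by
    refine eq_or_eq_neg_of_mul_ofReal_eq (Complex.exp_ne_zero _) ?_
      (hE.cexp_mul_mulVec_single_of_exp_mulVec_single hdecomp hpst r)
    simp [hγ, Complex.norm_exp]
  refine ⟨hpm, Set.ext fun x => exists_congr fun r => and_congr_right' ?_⟩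
  rcases hpm r with h | h <;> simp [h]

/-- If there is perfect state transfer from `u` to `v` at time `τ`, then for each spectral
idempotent `E_r` of the adjacency matrix we have `E_r e_u = ± E_r e_v`; in particular `u`
and `v` have the same eigenvalue support. -/
theorem pst_projections_pm {V : Type*} [Fintype V] [DecidableEq V]
    (G : SimpleGraph V) [DecidableRel G.Adj]
    {m : ℕ} (θ : Fin m → ℝ) (E : Fin m → Matrix V V ℝ)
    (hθ : Function.Injective θ)
    (hsym : ∀ r, (E r)ᵀ = E r)
    (hidem : ∀ r, E r * E r = E r)
    (horth : ∀ r s, r ≠ s → E r * E s = 0)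
    (hsum : ∑ r, E r = 1)
    (hdecomp : G.adjMatrix ℝ = ∑ r, θ r • E r)
    (u v : V) (τ : ℝ) (γ : ℂ) (hγ : ‖γ‖ = 1)
    (hpst : NormedSpace.exp ((Complex.I * τ) • G.adjMatrix ℂ) *ᵥ Pi.single u 1
      = γ • (Pi.single v 1 : V → ℂ)) :
    (∀ r, E r *ᵥ Pi.single u 1 = E r *ᵥ Pi.single v 1 ∨
        E r *ᵥ Pi.single u 1 = -(E r *ᵥ Pi.single v 1)) ∧
    {x : ℝ | ∃ r, θ r = x ∧ E r *ᵥ Pi.single u 1 ≠ 0}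
      = {x : ℝ | ∃ r, θ r = x ∧ E r *ᵥ Pi.single v 1 ≠ 0} :=
  pst_projections_pm_general G θ E hidem horth hdecomp u v τ γ hγ hpst
end

section
/- Let X be a connected graph and u a vertex. The set T of times t ∈ ℝ such that H(t)e_u is a scalar multiple of e_u is an additive subgroup of ℝ. -/
open Matrix Complex

section OneParameterFamily

variable {G n K : Type*} [AddGroup G] [Fintype n] [DecidableEq n] [Field K]
  (U : G → Matrix n n K) (map_add : ∀ s t, U (s + t) = U s * U t) (map_zero : U 0 = 1)

include map_add map_zero in
theorem mulVec_neg_mulVec (t : G) (v : n → K) : U (-t) *ᵥ (U t *ᵥ v) = v := by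
  rw [mulVec_mulVec, ← map_add, neg_add_cancel, map_zero, one_mulVec]

include map_add map_zero in
theorem exists_mulVec_neg_eq_smul {t : G} {v : n → K} {c : K} (h : U t *ᵥ v = c • v) :
    ∃ d : K, U (-t) *ᵥ v = d • v := by
  have hinv : c • (U (-t) *ᵥ v) = v := by
    rw [← mulVec_smul, ← h, mulVec_neg_mulVec U map_add map_zero]
  rcases eq_or_ne c 0 with rfl | hc
  · rw [zero_smul] at hinv
    exact ⟨0, by rw [← hinv, mulVec_zero, zero_smul]⟩
  · exact ⟨c⁻¹, (eq_inv_smul_iff₀ hc).2 hinv⟩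

def eigenTimes (v : n → K) : AddSubgroup G where
  carrier := {t | ∃ c : K, U t *ᵥ v = c • v}
  zero_mem' := ⟨1, by rw [map_zero, one_mulVec, one_smul]⟩
  add_mem' := by
    rintro s t ⟨c, hc⟩ ⟨d, hd⟩
    exact ⟨c * d, by rw [map_add, ← mulVec_mulVec, hd, mulVec_smul, hc, smul_smul, mul_comm]⟩
  neg_mem' := by
    rintro t ⟨c, hc⟩
    exact exists_mulVec_neg_eq_smul U map_add map_zero hc

end OneParameterFamily

section TransitionMatrix

variable {V : Type*} [Fintype V] [DecidableEq V] (G : SimpleGraph V) [DecidableRel G.Adj]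

theorem transitionMatrix_zero : transitionMatrix G 0 = 1 := by
  simp [transitionMatrix]

end TransitionMatrix

theorem periods_addSubgroup_general {V : Type*} [Fintype V] [DecidableEq V]
    (G : SimpleGraph V) [DecidableRel G.Adj] (u : V) :
    ∃ T : AddSubgroup ℝ, (T : Set ℝ) =
      {t : ℝ | ∃ c : ℂ, transitionMatrix G t *ᵥ Pi.single u 1
        = c • (Pi.single u 1 : V → ℂ)} :=
  ⟨eigenTimes (transitionMatrix G) (transitionMatrix_add G) (transitionMatrix_zero G)
    (Pi.single u 1), rfl⟩

/-- For a connected graph `X` and a vertex `u`, the set of times `t` such that `H(t)e_u`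
is a scalar multiple of `e_u` is an additive subgroup of `ℝ`. -/
theorem periods_addSubgroup {V : Type*} [Fintype V] [DecidableEq V]
    (G : SimpleGraph V) [DecidableRel G.Adj] (hconn : G.Connected) (u : V) :
    ∃ T : AddSubgroup ℝ, (T : Set ℝ) =
      {t : ℝ | ∃ c : ℂ, transitionMatrix G t *ᵥ Pi.single u 1
        = c • (Pi.single u 1 : V → ℂ)} :=
  periods_addSubgroup_general G u
end

section
/- Let A be a real symmetric matrix with largest eigenvalue θ_1 and smallest eigenvalue θ_m, and let x be a unit vector. If x^T exp(itA) x = 0 for some t > 0, then t ≥ π/(θ_1 − θ_m). -/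
open Matrix Complex Real

/-! Diagonalising `A` by a real orthogonal matrix turns `xᵀ e^{itA} x` into `∑ⱼ |yⱼ|² e^{itθⱼ}` with
`∑ⱼ |yⱼ|² = 1`. If `t (θ₁ - θ_m) < π`, all phases `tθⱼ` lie in an open half-circle centred at
`t (θ₁ + θ_m) / 2`, so such a convex combination cannot vanish. -/

theorem sum_exp_mul_ofReal_ne_zero_of_abs_sub_lt {ι : Type*} {s : Finset ι} {w θ : ι → ℝ} {c : ℝ}
    (hw : ∀ j ∈ s, 0 ≤ w j) (hw_pos : ∃ j ∈ s, 0 < w j)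
    (hθ : ∀ j ∈ s, |θ j - c| < π / 2) :
    ∑ j ∈ s, cexp (θ j * I) * w j ≠ 0 := by
  -- after rotating by `e^{-ic}` the real part is a nonnegative combination of positive cosines
  have hcos : ∀ j ∈ s, 0 < Real.cos (θ j - c) := fun j hj =>
    Real.cos_pos_of_mem_Ioo (abs_lt.mp (hθ j hj))
  have hre : (cexp (-c * I) * ∑ j ∈ s, cexp (θ j * I) * w j).re
      = ∑ j ∈ s, Real.cos (θ j - c) * w j := by
    rw [Finset.mul_sum, re_sum]
    refine Finset.sum_congr rfl fun j _ => ?_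
    rw [← mul_assoc, ← Complex.exp_add,
      show -c * I + θ j * I = ((θ j - c : ℝ) : ℂ) * I by push_cast; ring,
      re_mul_ofReal, exp_ofReal_mul_I_re]
  have hpos : 0 < ∑ j ∈ s, Real.cos (θ j - c) * w j :=
    Finset.sum_pos' (fun j hj => mul_nonneg (hcos j hj).le (hw j hj))
      (hw_pos.imp fun j ⟨hj, hwj⟩ => ⟨hj, mul_pos (hcos j hj) hwj⟩)
  intro h
  rw [h, mul_zero, zero_re] at hre
  exact hpos.ne hre

theorem pi_div_sup'_sub_inf'_le_of_sum_exp_eq_zero {ι : Type*} {s : Finset ι}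
    (hs : s.Nonempty) {w θ : ι → ℝ} {t : ℝ} (ht : 0 ≤ t)
    (hw : ∀ j ∈ s, 0 ≤ w j) (hw_pos : ∃ j ∈ s, 0 < w j)
    (h : ∑ j ∈ s, cexp (I * t * θ j) * w j = 0) :
    π / (s.sup' hs θ - s.inf' hs θ) ≤ t := by
  set b := s.sup' hs θ
  set a := s.inf' hs θ
  rcases le_or_gt (b - a) 0 with hba | hba
  · exact (div_nonpos_of_nonneg_of_nonpos pi_pos.le hba).trans ht
  by_contra! htba
  rw [lt_div_iff₀ hba] at htba
  -- all phases `t θ j` lie within `t (b - a) / 2 < π / 2` of the midpoint `t (a + b) / 2`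
  refine sum_exp_mul_ofReal_ne_zero_of_abs_sub_lt (θ := fun j => t * θ j) (c := t * (a + b) / 2)
    hw hw_pos (fun j hj => ?_) ?_
  · have := s.inf'_le θ hj
    have := s.le_sup' θ hj
    rw [abs_lt]
    constructor <;> nlinarith
  · convert h using 4 with j
    push_cast
    ring

theorem Matrix.IsHermitian.exists_unitary_map_ofReal_eq {m : Type*} [Fintype m] [DecidableEq m]
    {A : Matrix m m ℝ} (hA : A.IsHermitian) :
    ∃ U ∈ unitary (Matrix m m ℂ),
      A.map ofReal = U * diagonal (fun j => (hA.eigenvalues j : ℂ)) * star U := by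
  set V : Matrix m m ℝ := (hA.eigenvectorUnitary : Matrix m m ℝ)
  have hmul (M N : Matrix m m ℝ) : (M * N).map ofReal = M.map ofReal * N.map ofReal :=
    Matrix.map_mul (f := ofRealHom)
  have hstar : (star V).map ofReal = star (V.map ofReal) :=
    conjTranspose_map _ fun r => (conj_ofReal r).symm
  refine ⟨V.map ofReal, ?_, ?_⟩
  · have hV : V ∈ unitary (Matrix m m ℝ) := hA.eigenvectorUnitary.2
    rw [Unitary.mem_iff, ← hstar, ← hmul, ← hmul, Unitary.star_mul_self_of_mem hV,
      Unitary.mul_star_self_of_mem hV, Matrix.map_one _ ofReal_zero ofReal_one]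
    exact ⟨rfl, rfl⟩
  · conv_lhs => rw [hA.spectral_theorem, Unitary.conjStarAlgAut_apply]
    rw [hmul, hmul, hstar, diagonal_map ofReal_zero]
    rfl

theorem Matrix.exp_smul_unitary_conj_diagonal {m : Type*} [Fintype m] [DecidableEq m]
    {U : Matrix m m ℂ} (hU : U ∈ unitary (Matrix m m ℂ)) (z : ℂ) (d : m → ℂ) :
    NormedSpace.exp (z • (U * diagonal d * star U))
      = U * diagonal (fun j => cexp (z * d j)) * star U := by
  have hUinv : U⁻¹ = star U := inv_eq_right_inv (Unitary.mul_star_self_of_mem hU)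
  rw [← hUinv, ← Matrix.smul_mul, ← Matrix.mul_smul, ← diagonal_smul,
    exp_conj U _ (Unitary.isUnit_coe (U := ⟨U, hU⟩)), exp_diagonal, Pi.exp_def]
  simp only [Pi.smul_apply, smul_eq_mul, ← Complex.exp_eq_exp_ℂ]

theorem Matrix.star_dotProduct_conj_diagonal_mulVec {m : Type*} [Fintype m] [DecidableEq m]
    (U : Matrix m m ℂ) (d v : m → ℂ) :
    star v ⬝ᵥ (U * diagonal d * star U) *ᵥ v = ∑ j, d j * normSq ((star U *ᵥ v) j) := by
  have hvU : star v ᵥ* U = star (star U *ᵥ v) := by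
    rw [star_eq_conjTranspose, star_mulVec, conjTranspose_conjTranspose]
  rw [← mulVec_mulVec, ← mulVec_mulVec, dotProduct_mulVec, hvU]
  simp only [dotProduct, mulVec_diagonal]
  refine Finset.sum_congr rfl fun j _ => ?_
  rw [Pi.star_apply, ← mul_conj, RCLike.star_def]
  ring

theorem Matrix.sum_normSq_star_mulVec {m : Type*} [Fintype m] [DecidableEq m]
    {U : Matrix m m ℂ} (hU : U ∈ unitary (Matrix m m ℂ)) (v : m → ℂ) :
    (∑ j, normSq ((star U *ᵥ v) j) : ℂ) = star v ⬝ᵥ v := by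
  simpa [Unitary.mul_star_self_of_mem hU] using (star_dotProduct_conj_diagonal_mulVec U 1 v).symm

/-- If `A` is a real symmetric matrix with largest eigenvalue `θ₁` and smallest eigenvalue
`θ_m`, `x` is a unit vector, and `xᵀ exp(itA) x = 0` for some `t > 0`, then
`t ≥ π / (θ₁ − θ_m)`. -/
theorem min_time_zero_overlap {n : ℕ} [NeZero n]
    (A : Matrix (Fin n) (Fin n) ℝ) (hA : A.IsHermitian)
    (x : Fin n → ℝ) (hx : ∑ i, x i ^ 2 = 1) (t : ℝ) (ht : 0 < t)
    (hzero : (fun i => (x i : ℂ)) ⬝ᵥ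
        (NormedSpace.exp ((Complex.I * t) • A.map Complex.ofReal) *ᵥ fun i => (x i : ℂ))
      = 0) :
    t ≥ π / (Finset.univ.sup' Finset.univ_nonempty hA.eigenvalues
        - Finset.univ.inf' Finset.univ_nonempty hA.eigenvalues) := by
  obtain ⟨U, hU, hAU⟩ := hA.exists_unitary_map_ofReal_eq
  set v : Fin n → ℂ := fun i => (x i : ℂ)
  have hv : star v = v := funext fun i => conj_ofReal (x i)
  set w : Fin n → ℝ := fun j => normSq ((star U *ᵥ v) j)
  have hw : ∑ j, w j = 1 := by
    have hvv : star v ⬝ᵥ v = 1 := by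
      simp only [hv, v, dotProduct, ← sq]
      exact_mod_cast hx
    exact_mod_cast (sum_normSq_star_mulVec hU v).trans hvv
  obtain ⟨j, -, hj⟩ : ∃ j ∈ Finset.univ, (0 : ℝ) < w j :=
    Finset.exists_lt_of_sum_lt (by simp [hw])
  refine pi_div_sup'_sub_inf'_le_of_sum_exp_eq_zero _ ht.le
    (fun j _ => normSq_nonneg _) ⟨j, Finset.mem_univ j, hj⟩ ?_
  have hform : star v ⬝ᵥ NormedSpace.exp ((I * t) • A.map ofReal) *ᵥ v = 0 := by rwa [hv]
  rw [hAU, exp_smul_unitary_conj_diagonal hU, star_dotProduct_conj_diagonal_mulVec] at hform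
  simpa [w] using hform
end

section
/- Suppose A = P_1 + ⋯ + P_d where the P_r are pairwise commuting symmetric permutation matrices with P_r² = I. Then exp(itA) = Π_{r=1}^d (cos(t)I + i·sin(t)P_r). In particular exp(iπA) = (−1)^d I, and exp(i(π/2)A) = i^d P_1 P_2 ⋯ P_d. -/
/-!
Since `P_r² = 1`, the even and odd parts of the exponential series of `(i t) • P_r` sum to
`cos t • 1` and `(i sin t) • P_r`. The summands `(i t) • P_r` commute, so the exponential of their
sum is the product of their exponentials. At `t = π` every factor is `-1`, at `t = π/2` the
factor for `r` is `i • P_r`.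
-/

open Matrix Complex Real

theorem List.prod_ofFn_smul {M α : Type*} [Monoid M] [Monoid α] [MulAction α M]
    [IsScalarTower α M M] [SMulCommClass α M M] {n : ℕ} (c : α) (f : Fin n → M) :
    (List.ofFn fun i => c • f i).prod = c ^ n • (List.ofFn f).prod := by
  induction n with
  | zero => simp
  | succ n ih =>
    rw [List.ofFn_succ, List.ofFn_succ, List.prod_cons, List.prod_cons, ih, smul_mul_smul_comm,
      ← pow_succ']

open NormedSpace

theorem Matrix.exp_sum_eq_prod_ofFn_of_commute {m 𝔸 : Type*} [Fintype m] [DecidableEq m]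
    [NormedRing 𝔸] [NormedAlgebra ℚ 𝔸] [CompleteSpace 𝔸] {n : ℕ} (f : Fin n → Matrix m m 𝔸)
    (hf : ∀ i j, Commute (f i) (f j)) :
    exp (∑ i, f i) = (List.ofFn fun i => exp (f i)).prod := by
  induction n with
  | zero => simp
  | succ n ih =>
    rw [Fin.sum_univ_succ, List.ofFn_succ, List.prod_cons,
      Matrix.exp_add_of_commute _ _ (Commute.sum_right _ _ _ fun i _ => hf 0 i.succ),
      ih _ fun i j => hf _ _]

theorem NormedSpace.exp_I_mul_smul_of_mul_self_eq_one {𝔸 : Type*} [Ring 𝔸] [Algebra ℂ 𝔸]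
    [TopologicalSpace 𝔸] [IsTopologicalRing 𝔸] [ContinuousSMul ℂ 𝔸] [T2Space 𝔸] {Q : 𝔸}
    (hQ : Q * Q = 1) (z : ℂ) :
    exp ((I * z) • Q) = cos z • (1 : 𝔸) + (I * sin z) • Q := by
  have hpow_even (n : ℕ) : Q ^ (2 * n) = 1 := by rw [pow_mul, sq, hQ, one_pow]
  have hpow_odd (n : ℕ) : Q ^ (2 * n + 1) = Q := by rw [pow_succ, hpow_even, one_mul]
  rw [congrFun (exp_eq_tsum ℂ) ((I * z) • Q)]
  refine HasSum.tsum_eq (HasSum.even_add_odd ?_ ?_)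
  · convert (hasSum_cos z).smul_const (1 : 𝔸) using 2 with n
    rw [smul_pow, hpow_even, smul_smul, mul_pow, pow_mul, I_sq]
    ring_nf
  · convert ((hasSum_sin z).mul_left I).smul_const Q using 2 with n
    rw [smul_pow, hpow_odd, smul_smul, mul_pow, pow_succ, pow_mul, I_sq]
    ring_nf

theorem exp_sum_commuting_involutions_general {V : Type*} [Fintype V] [DecidableEq V]
    (d : ℕ) (P : Fin d → Matrix V V ℝ)
    (hinv : ∀ r, P r * P r = 1)
    (hcomm : ∀ r s, Commute (P r) (P s)) :
    (∀ t : ℝ, NormedSpace.exp ((Complex.I * t) • (∑ r, P r).map Complex.ofReal)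
        = (List.ofFn fun r => (Real.cos t : ℂ) • (1 : Matrix V V ℂ)
            + (Complex.I * Real.sin t) • (P r).map Complex.ofReal).prod) ∧
    NormedSpace.exp ((Complex.I * π) • (∑ r, P r).map Complex.ofReal)
      = ((-1 : ℂ) ^ d) • (1 : Matrix V V ℂ) ∧
    NormedSpace.exp ((Complex.I * (π / 2)) • (∑ r, P r).map Complex.ofReal)
      = (Complex.I ^ d) • (List.ofFn fun r => (P r).map Complex.ofReal).prod := by
  let Φ : Matrix V V ℝ →+* Matrix V V ℂ := ofRealHom.mapMatrix
  have hinvΦ (r : Fin d) : Φ (P r) * Φ (P r) = 1 := by rw [← map_mul, hinv, map_one]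
  have hexp_eq_prod (t : ℝ) : exp ((I * t) • (∑ r, P r).map ofReal) = (List.ofFn fun r =>
      (Real.cos t : ℂ) • (1 : Matrix V V ℂ) + (I * Real.sin t) • (P r).map ofReal).prod := by
    change exp ((I * t) • Φ (∑ r, P r)) = (List.ofFn fun r => _ + (I * Real.sin t) • Φ (P r)).prod
    rw [map_sum, Finset.smul_sum, Matrix.exp_sum_eq_prod_ofFn_of_commute _
      fun r s => (((hcomm r s).map Φ).smul_left _).smul_right _]
    simp only [ofReal_cos, ofReal_sin, exp_I_mul_smul_of_mul_self_eq_one (hinvΦ _)]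
  refine ⟨hexp_eq_prod, ?_, ?_⟩
  · rw [hexp_eq_prod π]
    simp only [Real.cos_pi, Real.sin_pi, ofReal_neg, ofReal_one, ofReal_zero, mul_zero, zero_smul,
      add_zero, List.ofFn_const, List.prod_replicate, smul_pow, one_pow]
  · simpa [List.prod_ofFn_smul] using hexp_eq_prod (π / 2)

/-- If `A = P₁ + ⋯ + P_d` is a sum of pairwise commuting symmetric permutation matrices
with `P_r² = I`, then `exp(itA) = Π_r (cos t • I + i sin t • P_r)`; in particular
`exp(iπA) = (-1)^d I` and `exp(i(π/2)A) = i^d P₁⋯P_d`. -/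
theorem exp_sum_commuting_involutions {V : Type*} [Fintype V] [DecidableEq V]
    (d : ℕ) (P : Fin d → Matrix V V ℝ)
    (hperm : ∀ r, ∃ σ : Equiv.Perm V, P r = σ.permMatrix ℝ)
    (hsym : ∀ r, (P r)ᵀ = P r)
    (hinv : ∀ r, P r * P r = 1)
    (hcomm : ∀ r s, Commute (P r) (P s)) :
    (∀ t : ℝ, NormedSpace.exp ((Complex.I * t) • (∑ r, P r).map Complex.ofReal)
        = (List.ofFn fun r => (Real.cos t : ℂ) • (1 : Matrix V V ℂ)
            + (Complex.I * Real.sin t) • (P r).map Complex.ofReal).prod) ∧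
    NormedSpace.exp ((Complex.I * π) • (∑ r, P r).map Complex.ofReal)
      = ((-1 : ℂ) ^ d) • (1 : Matrix V V ℂ) ∧
    NormedSpace.exp ((Complex.I * (π / 2)) • (∑ r, P r).map Complex.ofReal)
      = (Complex.I ^ d) • (List.ofFn fun r => (P r).map Complex.ofReal).prod :=
  exp_sum_commuting_involutions_general d P hinv hcomm
end

section
/- Let X be a Cayley graph of ℤ_2^d with connection set C = {c_1,…,c_m} (nonzero, distinct). If σ = c_1 + ⋯ + c_m ≠ 0, then there is perfect state transfer in X from 0 to σ at time π/2. -/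
open Matrix Complex Real

/-! The translation matrices `P_c` of an elementary abelian `2`-group are commuting involutions, and
an involution `Q` satisfies `exp (z • Q) = cosh z + sinh z • Q`, which is `I • Q` at
`z = I * π / 2`. Hence `exp (I * π / 2 • ∑ c ∈ C, P_c) = ∏ c ∈ C, I • P_c = I ^ #C • P_σ`, whose
`(0, σ)` entry is `I ^ #C`. -/

section Involution

variable {𝔸 : Type*} [Ring 𝔸] [Algebra ℂ 𝔸] [TopologicalSpace 𝔸] [IsTopologicalRing 𝔸]
  [T2Space 𝔸] [ContinuousSMul ℂ 𝔸] {Q : 𝔸}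

theorem exp_smul_eq_cosh_add_sinh_of_mul_self_eq_one (hQ : Q * Q = 1) (z : ℂ) :
    NormedSpace.exp (z • Q) = cosh z • 1 + sinh z • Q := by
  have hQ_even (k : ℕ) : Q ^ (2 * k) = 1 := by rw [pow_mul, sq, hQ, one_pow]
  have hQ_odd (k : ℕ) : Q ^ (2 * k + 1) = Q := by rw [pow_succ, hQ_even, one_mul]
  have hseries :
      HasSum (fun n ↦ ((n.factorial : ℂ)⁻¹) • (z • Q) ^ n) (cosh z • 1 + sinh z • Q) := by
    refine .even_add_odd ?_ ?_
    · convert (hasSum_cosh z).smul_const (1 : 𝔸) using 2 with k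
      rw [smul_pow, hQ_even, smul_smul, div_eq_inv_mul]
    · convert (hasSum_sinh z).smul_const Q using 2 with k
      rw [smul_pow, hQ_odd, smul_smul, div_eq_inv_mul]
  rw [NormedSpace.exp_eq_tsum ℂ]
  exact hseries.tsum_eq

theorem exp_I_mul_pi_div_two_smul_of_mul_self_eq_one (hQ : Q * Q = 1) :
    NormedSpace.exp ((I * (π / 2)) • Q) = I • Q := by
  rw [exp_smul_eq_cosh_add_sinh_of_mul_self_eq_one hQ, mul_comm, cosh_mul_I, sinh_mul_I,
    ← ofReal_ofNat, ← ofReal_div, ← ofReal_cos, ← ofReal_sin, Real.cos_pi_div_two,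
    Real.sin_pi_div_two]
  simp

end Involution

namespace AddChar

variable {G 𝔸 : Type*} [AddCommGroup G] [Module (ZMod 2) G]
  [NormedRing 𝔸] [NormedAlgebra ℂ 𝔸] [CompleteSpace 𝔸]

theorem exp_I_mul_pi_div_two_smul_sum (ψ : AddChar G 𝔸) (s : Finset G) :
    NormedSpace.exp ((I * (π / 2)) • ∑ c ∈ s, ψ c) = I ^ s.card • ψ (∑ c ∈ s, c) := by
  classical
  let : NormedAlgebra ℚ 𝔸 := .restrictScalars ℚ ℂ 𝔸
  induction s using Finset.induction_on with
  | empty => simp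
  | insert a s ha ih =>
    have hinv : ψ a * ψ a = 1 := by
      rw [← map_add_eq_mul, ZModModule.add_self, map_zero_eq_one]
    have hcomm : Commute ((I * (π / 2)) • ψ a) ((I * (π / 2)) • ∑ c ∈ s, ψ c) :=
      .smul_left (.smul_right (.sum_right _ _ _ fun c _ ↦ by
        rw [Commute, SemiconjBy, ← map_add_eq_mul, ← map_add_eq_mul, add_comm]) _) _
    rw [Finset.sum_insert ha, smul_add, NormedSpace.exp_add_of_commute hcomm, ih,
      exp_I_mul_pi_div_two_smul_of_mul_self_eq_one hinv, Finset.sum_insert ha,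
      Finset.card_insert_of_notMem ha, map_add_eq_mul, smul_mul_smul_comm, pow_succ']

end AddChar

namespace Matrix

variable {G : Type*} (R : Type*) [AddCommGroup G] [Fintype G] [DecidableEq G] [Semiring R]

def translationChar : AddChar G (Matrix G G R) where
  toFun c := (Equiv.addRight c).permMatrix R
  map_zero_eq_one' := by rw [Equiv.addRight_zero, permMatrix_one]
  map_add_eq_mul' a b := by rw [Equiv.addRight_add, permMatrix_mul]

variable {R}

theorem translationChar_apply (c x y : G) :
    translationChar R c x y = if y = x + c then 1 else 0 := by
  simp [translationChar, eq_comm]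

theorem sum_translationChar (C : Finset G) :
    ∑ c ∈ C, translationChar R c = of fun x y : G ↦ if y - x ∈ C then 1 else 0 := by
  ext x y
  simp_rw [sum_apply, translationChar_apply, ← sub_eq_iff_eq_add', of_apply]
  exact Finset.sum_ite_eq C (y - x) fun _ ↦ 1

end Matrix

theorem cubelike_pst_general (d : ℕ) (C : Finset (Fin d → ZMod 2)) :
    ‖(NormedSpace.exp ((Complex.I * (π / 2)) •
          Matrix.of (fun x y : Fin d → ZMod 2 => if x + y ∈ C then (1 : ℂ) else 0)))
        0 (∑ c ∈ C, c)‖ = 1 := by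
  have hA : of (fun x y : Fin d → ZMod 2 ↦ if x + y ∈ C then (1 : ℂ) else 0)
      = ∑ c ∈ C, translationChar ℂ c := by
    rw [sum_translationChar]
    simp_rw [ZModModule.sub_eq_add, add_comm]
  have hexp : NormedSpace.exp ((I * (π / 2)) • ∑ c ∈ C, translationChar ℂ c)
      = I ^ C.card • translationChar ℂ (∑ c ∈ C, c) := by
    open scoped Matrix.Norms.Operator in
    exact (translationChar ℂ).exp_I_mul_pi_div_two_smul_sum C
  rw [hA, hexp, Matrix.smul_apply, translationChar_apply, if_pos (zero_add _).symm, smul_eq_mul,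
    mul_one, norm_pow, norm_I, one_pow]

/-- Let `X` be a Cayley graph of `ℤ₂^d` with connection set `C` (not containing `0`).
If the sum `σ` of the elements of `C` is nonzero, then there is perfect state transfer
in `X` from `0` to `σ` at time `π/2`. -/
theorem cubelike_pst (d : ℕ) (C : Finset (Fin d → ZMod 2))
    (h0 : (0 : Fin d → ZMod 2) ∉ C)
    (hσ : ∑ c ∈ C, c ≠ 0) :
    ‖(NormedSpace.exp ((Complex.I * (π / 2)) •
          Matrix.of (fun x y : Fin d → ZMod 2 => if x + y ∈ C then (1 : ℂ) else 0)))
        0 (∑ c ∈ C, c)‖ = 1 :=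
  cubelike_pst_general d C
end

section
/- Suppose M is a matrix commuting with the adjacency matrix A, M e_u = e_u, and there is perfect state transfer from u to v at time τ. Then M e_v = e_v. -/
open Matrix Complex

theorem Matrix.mulVec_eq_self_of_commute_of_mulVec_eq_smul {n K : Type*} [Fintype n] [Field K]
    {M U : Matrix n n K} (hMU : Commute M U) {x y : n → K} {γ : K} (hγ : γ ≠ 0)
    (hx : M *ᵥ x = x) (hU : U *ᵥ x = γ • y) : M *ᵥ y = y := by
  have h : γ • (M *ᵥ y) = γ • y := by
    rw [← mulVec_smul, ← hU, mulVec_mulVec, hMU.eq, ← mulVec_mulVec, hx]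
  exact smul_right_injective _ hγ h

/-- If `M` commutes with the adjacency matrix, fixes `e_u`, and there is perfect state
transfer from `u` to `v` at time `τ`, then `M` fixes `e_v`. -/
theorem pst_fixed_vector {V : Type*} [Fintype V] [DecidableEq V]
    (G : SimpleGraph V) [DecidableRel G.Adj]
    (M : Matrix V V ℂ) (hM : M * G.adjMatrix ℂ = G.adjMatrix ℂ * M)
    (u v : V) (hMu : M *ᵥ Pi.single u 1 = (Pi.single u 1 : V → ℂ))
    (τ : ℝ) (γ : ℂ) (hγ : ‖γ‖ = 1)
    (hpst : NormedSpace.exp ((Complex.I * τ) • G.adjMatrix ℂ) *ᵥ Pi.single u 1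
      = γ • (Pi.single v 1 : V → ℂ)) :
    M *ᵥ Pi.single v 1 = (Pi.single v 1 : V → ℂ) := by
  have hcomm : Commute M (NormedSpace.exp ((Complex.I * τ) • G.adjMatrix ℂ)) :=
    (Commute.smul_right hM _).exp_right
  have hγ0 : γ ≠ 0 := norm_ne_zero_iff.mp (hγ ▸ one_ne_zero)
  exact mulVec_eq_self_of_commute_of_mulVec_eq_smul hcomm hγ0 hMu hpst
end

section
/- If X is a k-regular graph on n vertices with perfect state transfer from u to v at time τ, and τ is an integer multiple of 2π/n, then the complement of X has perfect state transfer from u to v at time τ. -/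
open Matrix Complex Real

/-!
Regularity makes `A = A(X)` commute with the adjacency matrix `J - I` of the complete graph, and
`A(Xᶜ) = (J - I) - A`, so `exp(iτA(Xᶜ)) = exp(iτ(J - I)) exp(-iτA)`. Since `J / n` is idempotent,
`exp(iτJ) = I + (e^{iτn} - 1) J / n`, which is `I` when `τ ∈ (2π/n)ℤ`; so the first factor is the
scalar `e^{-iτ}`. Finally `exp(-iτA)` is the entrywise conjugate of the symmetric matrix `exp(iτA)`,
hence it sends `e_u` to `conj γ • e_v`.
-/

-- The `0 ^ n` summand is the correction `1 - P` at `n = 0` and vanishes afterwards.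
theorem IsIdempotentElem.smul_pow {𝕂 𝔸 : Type*} [CommSemiring 𝕂] [Ring 𝔸] [Algebra 𝕂 𝔸]
    {P : 𝔸} (hP : IsIdempotentElem P) (a : 𝕂) (n : ℕ) :
    (a • P) ^ n = a ^ n • P + (0 : 𝕂) ^ n • (1 - P) := by
  cases n with
  | zero => simp
  | succ n => rw [_root_.smul_pow, hP.pow_succ_eq n, zero_pow n.succ_ne_zero, zero_smul, add_zero]

theorem IsIdempotentElem.exp_smul {𝕂 𝔸 : Type*} [RCLike 𝕂] [NormedRing 𝔸] [NormedAlgebra 𝕂 𝔸]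
    [CompleteSpace 𝔸] {P : 𝔸} (hP : IsIdempotentElem P) (a : 𝕂) :
    NormedSpace.exp (a • P) = NormedSpace.exp a • P + (1 - P) := by
  have hsum := ((NormedSpace.exp_series_hasSum_exp' (𝕂 := 𝕂) a).smul_const P).add
    ((NormedSpace.exp_series_hasSum_exp' (𝕂 := 𝕂) (0 : 𝕂)).smul_const (1 - P))
  rw [NormedSpace.exp_zero, one_smul] at hsum
  refine (NormedSpace.exp_series_hasSum_exp' (𝕂 := 𝕂) (a • P)).unique (hsum.congr_fun fun n => ?_)
  simp only [hP.smul_pow, smul_add, smul_smul, smul_eq_mul]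

section Matrix

variable {n : Type*} [Fintype n] [DecidableEq n]

theorem Matrix.exp_smul_of_isIdempotentElem {P : Matrix n n ℂ} (hP : IsIdempotentElem P)
    (a : ℂ) : NormedSpace.exp (a • P) = cexp a • P + (1 - P) := by
  rw [Complex.exp_eq_exp_ℂ]
  exact open scoped Norms.Operator in hP.exp_smul a

theorem Matrix.exp_smul_one (a : ℂ) : NormedSpace.exp (a • (1 : Matrix n n ℂ)) = cexp a • 1 := by
  rw [exp_smul_of_isIdempotentElem IsIdempotentElem.one, sub_self, add_zero]

theorem Matrix.isIdempotentElem_inv_card_smul_of_one [Nonempty n] :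
    IsIdempotentElem ((Fintype.card n : ℂ)⁻¹ • (of 1 : Matrix n n ℂ)) := by
  have hJ : (of 1 : Matrix n n ℂ) * of 1 = (Fintype.card n : ℂ) • of 1 := by
    ext i j; simp [mul_apply]
  have hn : (Fintype.card n : ℂ) ≠ 0 := Nat.cast_ne_zero.2 Fintype.card_ne_zero
  rw [IsIdempotentElem, smul_mul_smul_comm, hJ, smul_smul, mul_assoc, inv_mul_cancel₀ hn, mul_one]

theorem Matrix.exp_smul_of_one [Nonempty n] {a : ℂ} (ha : cexp (a * Fintype.card n) = 1) :
    NormedSpace.exp (a • (of 1 : Matrix n n ℂ)) = 1 := by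
  have hn : (Fintype.card n : ℂ) ≠ 0 := Nat.cast_ne_zero.2 Fintype.card_ne_zero
  have hscale : a • (of 1 : Matrix n n ℂ) =
      (a * Fintype.card n) • ((Fintype.card n : ℂ)⁻¹ • of 1) := by
    rw [smul_smul, mul_inv_cancel_right₀ hn]
  rw [hscale, exp_smul_of_isIdempotentElem isIdempotentElem_inv_card_smul_of_one, ha, one_smul,
    add_sub_cancel]

theorem SimpleGraph.exp_smul_adjMatrix_completeGraph [Nonempty n] {a : ℂ}
    (ha : cexp (a * Fintype.card n) = 1) :
    NormedSpace.exp (a • (completeGraph n).adjMatrix ℂ) = cexp (-a) • 1 := by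
  rw [adjMatrix_completeGraph_eq_of_one_sub_one, smul_sub, sub_eq_add_neg, ← neg_smul,
    exp_add_of_commute _ _ ((Commute.one_right _).smul_left _ |>.smul_right _),
    exp_smul_of_one ha, exp_smul_one, one_mul]

theorem Matrix.exp_star_smul_mulVec_star {A : Matrix n n ℂ} (hA : A.IsHermitian)
    (hAs : A.IsSymm) (a : ℂ) (w : n → ℂ) :
    NormedSpace.exp (star a • A) *ᵥ star w = star (NormedSpace.exp (a • A) *ᵥ w) := by
  have hconj : star a • A = (a • A)ᴴ := by rw [conjTranspose_smul, hA.eq]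
  rw [hconj, exp_conjTranspose, ← star_vecMul, ← mulVec_transpose, (hAs.smul a).exp.eq]

end Matrix

namespace SimpleGraph

variable {V α : Type*} (G : SimpleGraph V) [DecidableRel G.Adj]

theorem adjMatrix_compl_eq_sub [DecidableEq V] [AddCommGroup α] [One α] :
    Gᶜ.adjMatrix α = (completeGraph V).adjMatrix α - G.adjMatrix α :=
  eq_sub_of_add_eq' (IsCompl.adjMatrix_add_adjMatrix_eq_adjMatrix_completeGraph α isCompl_compl)

theorem IsRegularOfDegree.commute_adjMatrix_completeGraph [Fintype V] [DecidableEq V]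
    [NonAssocRing α] {k : ℕ} (hG : G.IsRegularOfDegree k) :
    Commute (G.adjMatrix α) ((completeGraph V).adjMatrix α) := by
  have hJ : Commute (G.adjMatrix α) (of 1) := by
    ext i j
    simp [adjMatrix_mul_apply, mul_adjMatrix_apply, hG i, hG j]
  rw [adjMatrix_completeGraph_eq_of_one_sub_one]
  exact hJ.sub_right (Commute.one_right _)

end SimpleGraph

/-- If `X` is a `k`-regular graph on `n` vertices with perfect state transfer from `u` to
`v` at time `τ`, and `τ` is an integer multiple of `2π/n`, then the complement of `X` has
perfect state transfer from `u` to `v` at time `τ`. -/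
theorem pst_complement {V : Type*} [Fintype V] [DecidableEq V]
    (G : SimpleGraph V) [DecidableRel G.Adj]
    (k : ℕ) (hreg : G.IsRegularOfDegree k)
    (u v : V) (τ : ℝ) (γ : ℂ) (hγ : ‖γ‖ = 1)
    (hpst : NormedSpace.exp ((Complex.I * τ) • G.adjMatrix ℂ) *ᵥ Pi.single u 1
      = γ • (Pi.single v 1 : V → ℂ))
    (m : ℤ) (hτ : τ = m * (2 * π / Fintype.card V)) :
    ∃ γ' : ℂ, ‖γ'‖ = 1 ∧
      NormedSpace.exp ((Complex.I * τ) • Gᶜ.adjMatrix ℂ) *ᵥ Pi.single u 1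
        = γ' • (Pi.single v 1 : V → ℂ) := by
  have : Nonempty V := ⟨u⟩
  have hperiod : cexp (I * τ * Fintype.card V) = 1 := by
    have hn : (Fintype.card V : ℂ) ≠ 0 := Nat.cast_ne_zero.2 Fintype.card_ne_zero
    rw [hτ, ← exp_int_mul_two_pi_mul_I m]
    push_cast
    field_simp
  have hcomm : Commute ((I * τ) • (⊤ : SimpleGraph V).adjMatrix ℂ)
      (star (I * τ) • G.adjMatrix ℂ) :=
    (hreg.commute_adjMatrix_completeGraph.symm.smul_left _).smul_right _
  have hsplit : NormedSpace.exp ((I * τ) • Gᶜ.adjMatrix ℂ)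
      = cexp (star (I * τ)) • NormedSpace.exp (star (I * τ) • G.adjMatrix ℂ) := by
    have hstar : -(I * τ) = star (I * τ) := by simp
    rw [G.adjMatrix_compl_eq_sub, smul_sub, sub_eq_add_neg, ← neg_smul, hstar,
      exp_add_of_commute _ _ hcomm, SimpleGraph.exp_smul_adjMatrix_completeGraph hperiod,
      smul_mul, one_mul, hstar]
  have hsingle : (Pi.single u 1 : V → ℂ) = star (Pi.single u 1) := by
    rw [Pi.star_single, star_one]
  refine ⟨cexp (star (I * τ)) * star γ, ?_, ?_⟩
  · simp [hγ, Complex.norm_exp]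
  · rw [hsplit, smul_mulVec, hsingle, exp_star_smul_mulVec_star (G.isHermitian_adjMatrix ℂ)
      G.isSymm_adjMatrix, hpst, star_smul, Pi.star_single, star_one, smul_smul]
end

section
/- Let A, B be real symmetric matrices with A = Σ_r θ_r E_r the spectral decomposition of A. Then exp(it(A⊗B)) = Σ_r E_r ⊗ exp(iθ_r t B). -/
open Matrix
open scoped Kronecker

/-!
Let `Pᵣ` be the complexified spectral projections of `A`. Since they are orthogonal idempotents
summing to `1`, the map `(Nᵣ)ᵣ ↦ Σᵣ Pᵣ ⊗ Nᵣ` is a unital ring homomorphism from the product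
algebra `∏ᵣ Mat_q(ℂ)` to `Mat_{pq}(ℂ)`. It is continuous, so it commutes with the exponential,
and the exponential on the product algebra is computed componentwise. Finally
`it (A ⊗ B) = Σᵣ Pᵣ ⊗ (iθᵣ t B)` is the image of `(iθᵣ t B)ᵣ`.
-/

namespace Matrix

variable {X ι l m n p R : Type*}

theorem _root_.Continuous.matrix_kronecker [TopologicalSpace X] [Mul R] [TopologicalSpace R]
    [ContinuousMul R] {A : X → Matrix l m R} {B : X → Matrix n p R}
    (hA : Continuous A) (hB : Continuous B) : Continuous fun x => A x ⊗ₖ B x :=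
  continuous_matrix fun _ _ => (hA.matrix_elem _ _).mul (hB.matrix_elem _ _)

theorem sum_kronecker [NonUnitalNonAssocSemiring R] (s : Finset ι) (A : ι → Matrix l m R)
    (B : Matrix n p R) : (∑ i ∈ s, A i) ⊗ₖ B = ∑ i ∈ s, A i ⊗ₖ B := by
  ext
  simp [Matrix.sum_apply, Finset.sum_mul]

section CompleteOrthogonalIdempotents

variable [Fintype ι] [Fintype m] [DecidableEq m] [Fintype n] [DecidableEq n]

def kroneckerSumRingHom [CommRing R] {P : ι → Matrix m m R}
    (hP : CompleteOrthogonalIdempotents P) :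
    (ι → Matrix n n R) →+* Matrix (m × n) (m × n) R where
  toFun N := ∑ i, P i ⊗ₖ N i
  map_one' := by
    simp only [Pi.one_apply, ← sum_kronecker, hP.complete, one_kronecker_one]
  map_mul' M N := by
    simp only [Pi.mul_apply, Finset.sum_mul_sum, ← mul_kronecker_mul]
    refine Finset.sum_congr rfl fun i _ => ?_
    rw [Finset.sum_eq_single i (fun j _ hji => by rw [hP.ortho hji.symm, zero_kronecker])
      (by simp), (hP.idem i).eq]
  map_zero' := by simp
  map_add' M N := by simp [kronecker_add, Finset.sum_add_distrib]

theorem kroneckerSumRingHom_apply [CommRing R] {P : ι → Matrix m m R}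
    (hP : CompleteOrthogonalIdempotents P) (N : ι → Matrix n n R) :
    kroneckerSumRingHom hP N = ∑ i, P i ⊗ₖ N i :=
  rfl

theorem continuous_kroneckerSumRingHom [CommRing R] [TopologicalSpace R] [IsTopologicalRing R]
    {P : ι → Matrix m m R} (hP : CompleteOrthogonalIdempotents P) :
    Continuous (kroneckerSumRingHom (n := n) hP) :=
  continuous_finsetSum _ fun i _ => continuous_const.matrix_kronecker (continuous_apply i)

open scoped Norms.Operator in
theorem exp_sum_kronecker {𝕜 : Type*} [RCLike 𝕜]
    {P : ι → Matrix m m 𝕜} (hP : CompleteOrthogonalIdempotents P) (N : ι → Matrix n n 𝕜) :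
    NormedSpace.exp (∑ i, P i ⊗ₖ N i) = ∑ i, P i ⊗ₖ NormedSpace.exp (N i) := by
  -- instance search does not find completeness for the operator-norm uniformity
  have hcomplete := fun _ : ι => FiniteDimensional.complete 𝕜 (Matrix n n 𝕜)
  have h := (NormedSpace.map_exp _ (continuous_kroneckerSumRingHom hP) N).symm
  rw [@Pi.exp_def _ _ _ _ _ hcomplete, kroneckerSumRingHom_apply, kroneckerSumRingHom_apply] at h
  -- `h` lives in the operator-norm ring and topology, which agree with the default ones by `rfl`
  convert h using 2 <;> rfl

end CompleteOrthogonalIdempotents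

end Matrix

theorem exp_direct_product_general {p q : ℕ}
    (A : Matrix (Fin p) (Fin p) ℝ) (B : Matrix (Fin q) (Fin q) ℝ)
    {m : ℕ} (θ : Fin m → ℝ) (E : Fin m → Matrix (Fin p) (Fin p) ℝ)
    (horth : ∀ r s, r ≠ s → E r * E s = 0)
    (hsum : ∑ r, E r = 1)
    (hdecomp : A = ∑ r, θ r • E r) (t : ℝ) :
    NormedSpace.exp ((Complex.I * t) • (A.map Complex.ofReal ⊗ₖ B.map Complex.ofReal))
      = ∑ r, (E r).map Complex.ofReal
          ⊗ₖ NormedSpace.exp ((Complex.I * (θ r * t)) • B.map Complex.ofReal) := by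
  have hE : CompleteOrthogonalIdempotents E :=
    CompleteOrthogonalIdempotents.iff_ortho_complete.mpr ⟨horth, hsum⟩
  have hA : A.map Complex.ofReal = ∑ r, (θ r : ℂ) • (E r).map Complex.ofReal := by
    ext i j
    simp [hdecomp, Matrix.sum_apply]
  have harg : (Complex.I * t) • (A.map Complex.ofReal ⊗ₖ B.map Complex.ofReal)
      = ∑ r, (E r).map Complex.ofReal ⊗ₖ ((Complex.I * (θ r * t)) • B.map Complex.ofReal) := by
    rw [hA, sum_kronecker, Finset.smul_sum]
    refine Finset.sum_congr rfl fun r _ => ?_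
    rw [smul_kronecker, ← kronecker_smul, ← kronecker_smul, smul_smul]
    ring_nf
  rw [harg]
  exact exp_sum_kronecker (hE.map (Complex.ofRealHom.mapMatrix (m := Fin p))) _

/-- If `A = Σ_r θ_r E_r` is the spectral decomposition of a real symmetric matrix `A` and
`B` is real symmetric, then `exp(it(A⊗B)) = Σ_r E_r ⊗ exp(iθ_r t B)`. -/
theorem exp_direct_product {p q : ℕ}
    (A : Matrix (Fin p) (Fin p) ℝ) (B : Matrix (Fin q) (Fin q) ℝ)
    (hA : A.IsSymm) (hB : B.IsSymm)
    {m : ℕ} (θ : Fin m → ℝ) (E : Fin m → Matrix (Fin p) (Fin p) ℝ)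
    (hθ : Function.Injective θ)
    (hsym : ∀ r, (E r)ᵀ = E r)
    (hidem : ∀ r, E r * E r = E r)
    (horth : ∀ r s, r ≠ s → E r * E s = 0)
    (hsum : ∑ r, E r = 1)
    (hdecomp : A = ∑ r, θ r • E r) (t : ℝ) :
    NormedSpace.exp ((Complex.I * t) • (A.map Complex.ofReal ⊗ₖ B.map Complex.ofReal))
      = ∑ r, (E r).map Complex.ofReal
          ⊗ₖ NormedSpace.exp ((Complex.I * (θ r * t)) • B.map Complex.ofReal) :=
  exp_direct_product_general A B θ E horth hsum hdecomp t
end
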